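/- (Mod 2 erasure) Fix b₁, b₂ ∈ [0,1] and integers 1 ≤ r₁ < r₂ < ⋯ < r_m = n, and set r₀ := 0. Define g_π : {0,1}ⁿ → {0,1}^m by g_π(x)_k := (x_{r_{k−1}+1} + ⋯ + x_{r_k}) mod 2. Fix 𝔦, 𝔧, 𝔨, 𝔩 ∈ {0,1}^m. For all i, j ∈ {0,1}ⁿ satisfying g_π(i) = 𝔦 and g_π(j) = 𝔧, one has Σ Lⁿ(i,j;k,l) = Lᵐ(𝔦,𝔧;𝔨,𝔩), where the sum ranges over all k, l ∈ {0,1}ⁿ with g_π(k) = 𝔨 and g_π(l) = 𝔩. -/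

import Mathlib

/-- Exponents of the indeterminates `b₁` (resp. `b₂`) appearing in a formal weight:
`e` for exponent zero (factor `1`), `pl` for the factor `bᵢ`, `mi` for the factor `1 - bᵢ`. -/
inductive Eps : Type
  | e : Eps
  | pl : Eps
  | mi : Eps
deriving DecidableEq

instance : Fintype Eps :=
  ⟨{.e, .pl, .mi}, fun x => by cases x <;> simp⟩

/-- The 10-element set of formal weights: `none` represents `0`, and `some (ε₁, ε₂)`
represents the monomial `f₁(ε₁) f₂(ε₂)`. -/
abbrev Wt : Type := Option (Eps × Eps)

/-- The join operation on exponents: `a ∨ a = a`, `e ∨ a = a ∨ e = a`, and the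
clash `{+, −}` gives `none` (i.e. the factor `0`). -/
def Eps.vee : Eps → Eps → Option Eps
  | .e, a => some a
  | a, .e => some a
  | .pl, .pl => some .pl
  | .mi, .mi => some .mi
  | .pl, .mi => none
  | .mi, .pl => none

/-- The Boolean-type product `*` on the formal weight set `Wt`. -/
def wmul : Wt → Wt → Wt
  | none, _ => none
  | _, none => none
  | some (a₁, a₂), some (c₁, c₂) =>
    match a₁.vee c₁, a₂.vee c₂ with
    | some x, some y => some (x, y)
    | _, _ => none

/-- Evaluation of an exponent of `b₁`: `f₁(e) = 1`, `f₁(+) = b₁`, `f₁(−) = 1 - b₁`. -/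
def f1 (b1 : ℝ) : Eps → ℝ
  | .e => 1
  | .pl => b1
  | .mi => 1 - b1

/-- Evaluation of an exponent of `b₂`: `f₂(e) = 1`, `f₂(+) = b₂`, `f₂(−) = 1 - b₂`. -/
def f2 (b2 : ℝ) : Eps → ℝ
  | .e => 1
  | .pl => b2
  | .mi => 1 - b2

/-- The evaluation map `ev_{b₁,b₂} : W → ℝ`. -/
def ev (b1 b2 : ℝ) : Wt → ℝ
  | none => 0
  | some (x, y) => f1 b1 x * f2 b2 y

/-- The formal one-colored vertex weights `L̂¹(i, j; k, l) ∈ W`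
(`i` = bottom input, `j` = left input, `k` = top output, `l` = right output,
with `true` standing for `1`). -/
def Lhat1 : Bool → Bool → Bool → Bool → Wt
  | true, false, true, false => some (.e, .e)
  | false, true, false, true => some (.e, .e)
  | false, false, false, false => some (.e, .pl)
  | false, false, true, true => some (.e, .mi)
  | true, true, true, true => some (.pl, .e)
  | true, true, false, false => some (.mi, .e)
  | _, _, _, _ => none

/-- The `r`-fold projection `s_r(x) = (x₁ + ⋯ + x_r) mod 2` of a vector `x ∈ {0,1}ⁿ`
(here `r : Fin n` stands for the `1`-indexed level `r + 1`). -/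
def sproj {n : ℕ} (x : Fin n → Bool) (r : Fin n) : Bool :=
  decide ((∑ t ∈ Finset.univ.filter (fun t : Fin n => t ≤ r),
    (if x t then (1 : ℕ) else 0)) % 2 = 1)

/-- The formal `n`-colored vertex weight
`L̂ⁿ(i, j; k, l) = ∏*_{r=1}^n L̂¹(s_r(i), s_r(j); s_r(k), s_r(l)) ∈ W`,
where the product is taken with respect to the Boolean-type product `*`. -/
def Lhatn {n : ℕ} (i j k l : Fin n → Bool) : Wt :=
  (List.ofFn (fun r : Fin n =>
    Lhat1 (sproj i r) (sproj j r) (sproj k r) (sproj l r))).foldr wmul (some (.e, .e))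

/-- The real `n`-colored vertex weight `Lⁿ(i, j; k, l) = ev_{b₁,b₂}(L̂ⁿ(i, j; k, l))`. -/
def Ln (b1 b2 : ℝ) {n : ℕ} (i j k l : Fin n → Bool) : ℝ :=
  ev b1 b2 (Lhatn i j k l)

/-- The value `r_{k-1}` with the convention `r₀ = 0`. -/
def rprev {m : ℕ} (r : Fin m → ℕ) (k : Fin m) : ℕ :=
  if k.val = 0 then 0
  else r ⟨k.val - 1, Nat.lt_of_le_of_lt (Nat.sub_le _ _) k.isLt⟩

/-- The projection map `g_π : {0,1}ⁿ → {0,1}ᵐ` associated with the partition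
`π = {{1,…,r₁}, {r₁+1,…,r₂}, …, {r_{m-1}+1,…,r_m}}`:
`g_π(x)_k = (x_{r_{k-1}+1} + ⋯ + x_{r_k}) mod 2` (positions `p : Fin n` are `0`-indexed,
standing for the `1`-indexed coordinate `p + 1`). -/
def gpi {n m : ℕ} (r : Fin m → ℕ) (x : Fin n → Bool) (k : Fin m) : Bool :=
  decide ((∑ p ∈ Finset.univ.filter
      (fun p : Fin n => rprev r k ≤ p.val ∧ p.val < r k),
    (if x p then (1 : ℕ) else 0)) % 2 = 1)

/-!
Write `s(x) = (s₁(x), …, sₙ(x))` for the prefix parities of `x`. The map `x ↦ s(x)` is a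
bijection of `{0,1}ⁿ`, and `g_π(x) = 𝔨` says exactly that `s(x)` takes the values `s(𝔨)` at the
block ends `r_κ`. After substituting `K = s(k)`, `L = s(l)`, the sum runs over `K, L` pinned at
the block ends and free elsewhere, of `ev (∏ₜ L̂¹(s_t(i), s_t(j); K_t, L_t))`. Every one-colored
weight is stochastic for `ev`, i.e. `∑_{k,l} ev (L̂¹(i,j;k,l) * v) = ev v` for all `v`, so the free
coordinates sum out one at a time. What is left is the product of the weights at the block ends,
where `s_{r_κ}(i) = s_κ(𝔦)`; that product is `L̂ᵐ(𝔦,𝔧;𝔨,𝔩)`.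
-/

open Function

section Marginal

variable {M R β : Type*} [AddCommMonoid R] [Fintype β] (φ : M → R)

theorem sum_apply_prod_mul [CommMonoid M] {n : ℕ} (a : Fin n → β → M) (c : Fin n → M)
    (h : ∀ t v, ∑ b, φ (a t b * v) = φ (c t * v)) (w : M) :
    ∑ K : Fin n → β, φ ((∏ t, a t (K t)) * w) = φ ((∏ t, c t) * w) := by
  induction n generalizing w with
  | zero => simp
  | succ n ih =>
    rw [← (Fin.consEquiv fun _ => β).sum_comp, Fintype.sum_prod_type]
    simp only [Fin.consEquiv_apply, Fin.prod_univ_succ, Fin.cons_zero, Fin.cons_succ]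
    calc ∑ b, ∑ K : Fin n → β, φ ((a 0 b * ∏ t : Fin n, a t.succ (K t)) * w)
        = ∑ b, ∑ K : Fin n → β, φ ((∏ t : Fin n, a t.succ (K t)) * (a 0 b * w)) := by
          simp only [mul_left_comm, mul_assoc]
      _ = ∑ b, φ (a 0 b * ((∏ t : Fin n, c t.succ) * w)) := by
          refine Finset.sum_congr rfl fun b _ => ?_
          rw [ih _ _ (fun t => h t.succ), mul_left_comm]
      _ = φ ((c 0 * ∏ t : Fin n, c t.succ) * w) := by rw [h, mul_assoc]

theorem sum_ite_comp_eq [CommMonoidWithZero M] [DecidableEq β] {ι : Type*} [Fintype ι]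
    {n : ℕ} (hφ : φ 0 = 0) {e : ι → Fin n} (he : Injective e) (a : Fin n → β → M)
    (ha : ∀ t v, ∑ b, φ (a t b * v) = φ v) (T : ι → β) :
    ∑ K : Fin n → β, (if K ∘ e = T then φ (∏ t, a t (K t)) else 0) =
      φ (∏ κ, a (e κ) (T κ)) := by
  -- Pinning a coordinate to `T κ` is the same as giving its other values the weight `0`.
  let a' : Fin n → β → M := fun t b => if ∃ κ, e κ = t ∧ b ≠ T κ then 0 else a t b
  let c : Fin n → M := fun t => ∏ κ with e κ = t, a (e κ) (T κ)
  have ha' : ∀ t v, ∑ b, φ (a' t b * v) = φ (c t * v) := by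
    intro t v
    by_cases ht : ∃ κ, e κ = t
    · obtain ⟨κ, rfl⟩ := ht
      have hc : c (e κ) = a (e κ) (T κ) :=
        Finset.prod_eq_single_of_mem κ (by simp)
          fun κ' hκ' hne => absurd (he (Finset.mem_filter.1 hκ').2) hne
      rw [hc, Fintype.sum_eq_single (T κ)]
      · simp [a', he.eq_iff]
      · intro b hb
        simp [a', he.eq_iff, hb, hφ]
    · push Not at ht
      have hc : c t = 1 := Finset.prod_eq_one fun κ hκ => absurd (Finset.mem_filter.1 hκ).2 (ht κ)
      simp [a', c, hc, ht, ha]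
  have hK : ∀ K : Fin n → β,
      (if K ∘ e = T then φ (∏ t, a t (K t)) else 0) = φ ((∏ t, a' t (K t)) * 1) := by
    intro K
    rw [mul_one]
    split_ifs with hKT
    · refine congrArg φ (Finset.prod_congr rfl fun t _ => (if_neg ?_).symm)
      rintro ⟨κ, rfl, hne⟩
      exact hne (congrFun hKT κ)
    · obtain ⟨κ, hκ⟩ : ∃ κ, K (e κ) ≠ T κ := by
        by_contra! h
        exact hKT (funext h)
      rw [Finset.prod_eq_zero (Finset.mem_univ (e κ))
        (show a' (e κ) (K (e κ)) = 0 from if_pos ⟨κ, rfl, hκ⟩), hφ]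
  rw [Fintype.sum_congr _ _ hK, sum_apply_prod_mul φ a' c ha', mul_one]
  exact congrArg φ (Finset.prod_fiberwise Finset.univ e _)

end Marginal

instance : CommMonoidWithZero Wt where
  mul := wmul
  one := some (.e, .e)
  zero := none
  mul_assoc := by decide
  one_mul := by decide
  mul_one := by decide
  mul_comm := by decide
  zero_mul := by decide
  mul_zero := by decide

lemma Wt.mul_def (a b : Wt) : a * b = wmul a b := rfl

lemma ev_zero (b1 b2 : ℝ) : ev b1 b2 0 = 0 := rfl

lemma Lhatn_eq_prod {n : ℕ} (i j k l : Fin n → Bool) :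
    Lhatn i j k l = ∏ t, Lhat1 (sproj i t) (sproj j t) (sproj k t) (sproj l t) := by
  rw [Lhatn, ← List.prod_ofFn, List.prod_eq_foldr]
  rfl

/-- For `(i, j) = (0, 0)` the two nonzero weights are `(e,+)` and `(e,−)`: if `v` has exponent `e`
in `b₂` they contribute `b₂ · ev v` and `(1 - b₂) · ev v`, otherwise one of them vanishes and the
other is absorbed into `v`. The case `(1, 1)` is the same in `b₁`, and for `(1, 0)`, `(0, 1)` the
only nonzero weight is `1`. -/
lemma sum_ev_Lhat1_mul (b1 b2 : ℝ) (i j : Bool) (v : Wt) :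
    ∑ p : Bool × Bool, ev b1 b2 (Lhat1 i j p.1 p.2 * v) = ev b1 b2 v := by
  rcases v with _ | ⟨x, y⟩
  · exact Fintype.sum_eq_zero _ fun _ => congrArg (ev b1 b2) (mul_zero _)
  · cases i <;> cases j <;> cases x <;> cases y <;>
      simp [Fintype.sum_prod_type, Wt.mul_def, Lhat1, wmul, ev, f1, f2, Eps.vee] <;> ring

lemma sum_sum_ite_ev_prod_Lhat1 (b1 b2 : ℝ) {ι : Type*} [Fintype ι] {n : ℕ} {e : ι → Fin n}
    (he : Injective e) (I J : Fin n → Bool) (A C : ι → Bool) :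
    ∑ K : Fin n → Bool, ∑ L : Fin n → Bool,
      (if (∀ κ, K (e κ) = A κ) ∧ ∀ κ, L (e κ) = C κ then
        ev b1 b2 (∏ t, Lhat1 (I t) (J t) (K t) (L t)) else 0) =
      ev b1 b2 (∏ κ, Lhat1 (I (e κ)) (J (e κ)) (A κ) (C κ)) := by
  rw [← Fintype.sum_prod_type', ← (Equiv.arrowProdEquivProdArrow _ _ _).sum_comp]
  convert sum_ite_comp_eq (ev b1 b2) (ev_zero b1 b2) he (fun t p => Lhat1 (I t) (J t) p.1 p.2)
    (fun t => sum_ev_Lhat1_mul b1 b2 (I t) (J t)) (fun κ => (A κ, C κ)) using 2 with P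
  simp [funext_iff, Prod.ext_iff, forall_and]

section Parity

variable {n : ℕ}

def prefixCount (x : Fin n → Bool) (a : ℕ) : ℕ :=
  ∑ t ∈ Finset.univ.filter (fun t : Fin n => t.val < a), if x t then 1 else 0

lemma prefixCount_add_sum (x : Fin n → Bool) {a b : ℕ} (hab : a ≤ b) :
    prefixCount x a + ∑ t ∈ Finset.univ.filter (fun t : Fin n => a ≤ t.val ∧ t.val < b),
      (if x t then 1 else 0) = prefixCount x b := by
  simp only [prefixCount, Finset.sum_filter, ← Finset.sum_add_distrib]
  refine Finset.sum_congr rfl fun t _ => ?_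
  split_ifs <;> omega

lemma prefixCount_zero (x : Fin n → Bool) : prefixCount x 0 = 0 := by
  simp [prefixCount]

lemma prefixCount_succ (x : Fin n → Bool) (t : Fin n) :
    prefixCount x (t + 1) = prefixCount x t + if x t then 1 else 0 := by
  rw [← prefixCount_add_sum x (Nat.le_succ t)]
  congr 1
  refine Finset.sum_eq_single_of_mem t (by simp) fun s hs hst => absurd ?_ hst
  have := (Finset.mem_filter.1 hs).2
  exact Fin.ext (by omega)

lemma decide_mod_two_eq_one_eq_bodd (N : ℕ) : decide (N % 2 = 1) = N.bodd := by
  rw [Nat.mod_two_of_bodd]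
  cases N.bodd <;> rfl

lemma sproj_eq_bodd (x : Fin n → Bool) (t : Fin n) :
    sproj x t = (prefixCount x (t + 1)).bodd := by
  simp only [sproj, prefixCount, ← decide_mod_two_eq_one_eq_bodd, Fin.le_iff_val_le_val,
    Nat.lt_succ_iff]

lemma sproj_eq_xor (x : Fin n → Bool) (t : Fin n) :
    sproj x t = xor (prefixCount x t).bodd (x t) := by
  rw [sproj_eq_bodd, prefixCount_succ, Nat.bodd_add]
  cases x t <;> rfl

lemma bodd_prefixCount_eq_of_sproj_eq {x y : Fin n → Bool} (h : sproj x = sproj y) {a : ℕ}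
    (ha : a ≤ n) : (prefixCount x a).bodd = (prefixCount y a).bodd := by
  cases a with
  | zero => simp [prefixCount_zero]
  | succ a => simpa [sproj_eq_bodd] using congrFun h ⟨a, ha⟩

lemma sproj_injective : Injective (sproj : (Fin n → Bool) → Fin n → Bool) := by
  intro x y h
  funext t
  have := congrFun h t
  rwa [sproj_eq_xor, sproj_eq_xor, bodd_prefixCount_eq_of_sproj_eq h t.is_lt.le,
    Bool.xor_right_inj] at this

lemma sum_sum_comp_sproj {R : Type*} [AddCommMonoid R]
    (F : (Fin n → Bool) → (Fin n → Bool) → R) :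
    ∑ k, ∑ l, F (sproj k) (sproj l) = ∑ K, ∑ L, F K L := by
  let σ := Equiv.ofBijective _ (Finite.injective_iff_bijective.1 (sproj_injective (n := n)))
  calc ∑ k, ∑ l, F (sproj k) (sproj l) = ∑ k, ∑ L, F (sproj k) L :=
        Fintype.sum_congr _ _ fun k => σ.sum_comp (F (sproj k))
    _ = ∑ K, ∑ L, F K L := σ.sum_comp fun K => ∑ L, F K L

end Parity

section Blocks

variable {n m : ℕ} {r : Fin m → ℕ}

lemma rprev_le (hr : Monotone r) (κ : Fin m) : rprev r κ ≤ r κ := by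
  unfold rprev
  split_ifs
  · exact Nat.zero_le _
  · exact hr (Fin.mk_le_mk.2 (Nat.sub_le _ _))

lemma bodd_prefixCount_eq_xor_gpi (hr : Monotone r) (x : Fin n → Bool) (κ : Fin m) :
    (prefixCount x (r κ)).bodd = xor (prefixCount x (rprev r κ)).bodd (gpi r x κ) := by
  rw [← prefixCount_add_sum x (rprev_le hr κ), Nat.bodd_add, gpi, decide_mod_two_eq_one_eq_bodd]

lemma bodd_prefixCount_eq_sproj_gpi (hr : Monotone r) (x : Fin n → Bool) (κ : Fin m) :
    (prefixCount x (r κ)).bodd = sproj (gpi r x) κ := by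
  obtain ⟨k, hk⟩ := κ
  induction k with
  | zero => simp [bodd_prefixCount_eq_xor_gpi hr, sproj_eq_xor, rprev, prefixCount_zero]
  | succ k ih =>
    rw [bodd_prefixCount_eq_xor_gpi hr, sproj_eq_xor]
    simp [rprev, ih (by omega), sproj_eq_bodd]

lemma gpi_eq_iff (hr : Monotone r) {e : Fin m → Fin n} (he : ∀ κ, (e κ).val + 1 = r κ)
    (x : Fin n → Bool) (fx : Fin m → Bool) :
    gpi r x = fx ↔ ∀ κ, sproj x (e κ) = sproj fx κ := by
  have hx : ∀ κ, sproj x (e κ) = sproj (gpi r x) κ := fun κ => by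
    rw [sproj_eq_bodd, he, bodd_prefixCount_eq_sproj_gpi hr]
  simp only [hx, ← funext_iff, sproj_injective.eq_iff]

end Blocks

theorem Ln_mod_two_erasure_general
    (b1 b2 : ℝ)
    (n m : ℕ) (hm : 1 ≤ m)
    (r : Fin m → ℕ) (hmono : StrictMono r)
    (hfirst : 1 ≤ r ⟨0, hm⟩)
    (hlast : r ⟨m - 1, Nat.sub_lt hm Nat.one_pos⟩ = n)
    (fi fj fk fl : Fin m → Bool)
    (i j : Fin n → Bool)
    (hi : gpi r i = fi) (hj : gpi r j = fj) :
    ∑ k ∈ Finset.univ.filter (fun k : Fin n → Bool => gpi r k = fk),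
      ∑ l ∈ Finset.univ.filter (fun l : Fin n → Bool => gpi r l = fl),
        Ln b1 b2 i j k l = Ln b1 b2 fi fj fk fl := by
  have hr_pos (κ : Fin m) : 1 ≤ r κ :=
    hfirst.trans (hmono.monotone (Fin.le_def.2 (Nat.zero_le _)))
  have hr_le (κ : Fin m) : r κ ≤ n := hlast ▸ hmono.monotone (Fin.mk_le_mk.2 (by omega))
  obtain ⟨e, he⟩ : ∃ e : Fin m → Fin n, ∀ κ, (e κ).val + 1 = r κ :=
    ⟨fun κ => ⟨r κ - 1, by grind⟩, fun κ => Nat.sub_add_cancel (hr_pos κ)⟩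
  have he_inj : Injective e := fun κ κ' h => hmono.injective (by grind)
  have hg := gpi_eq_iff hmono.monotone he
  calc _ = ∑ k, ∑ l, (if (∀ κ, sproj k (e κ) = sproj fk κ) ∧ ∀ κ, sproj l (e κ) = sproj fl κ then
          ev b1 b2 (∏ t, Lhat1 (sproj i t) (sproj j t) (sproj k t) (sproj l t)) else 0) := by
        simp only [Finset.sum_filter, hg, Ln, Lhatn_eq_prod, ite_and, Finset.ite_sum_zero]
    _ = ev b1 b2 (∏ κ, Lhat1 (sproj i (e κ)) (sproj j (e κ)) (sproj fk κ) (sproj fl κ)) := by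
        convert (sum_sum_comp_sproj _).trans
          (sum_sum_ite_ev_prod_Lhat1 b1 b2 he_inj (sproj i) (sproj j) (sproj fk) (sproj fl)) using 4
    _ = Ln b1 b2 fi fj fk fl := by
        simp only [Ln, Lhatn_eq_prod, (hg i fi).1 hi, (hg j fj).1 hj]

/-- Mod 2 erasure: for a partition `1 ≤ r₁ < ⋯ < r_m = n` of `{1, …, n}`, summing
`Lⁿ(i, j; k, l)` over all outputs `k, l ∈ {0,1}ⁿ` with `g_π(k) = 𝔨` and `g_π(l) = 𝔩`
recovers `Lᵐ(𝔦, 𝔧; 𝔨, 𝔩)`, whenever `g_π(i) = 𝔦` and `g_π(j) = 𝔧`. -/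
theorem Ln_mod_two_erasure
    (b1 b2 : ℝ) (hb1 : b1 ∈ Set.Icc (0 : ℝ) 1) (hb2 : b2 ∈ Set.Icc (0 : ℝ) 1)
    (n m : ℕ) (hm : 1 ≤ m)
    (r : Fin m → ℕ) (hmono : StrictMono r)
    (hfirst : 1 ≤ r ⟨0, hm⟩)
    (hlast : r ⟨m - 1, Nat.sub_lt hm Nat.one_pos⟩ = n)
    (fi fj fk fl : Fin m → Bool)
    (i j : Fin n → Bool)
    (hi : gpi r i = fi) (hj : gpi r j = fj) :
    ∑ k ∈ Finset.univ.filter (fun k : Fin n → Bool => gpi r k = fk),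
      ∑ l ∈ Finset.univ.filter (fun l : Fin n → Bool => gpi r l = fl),
        Ln b1 b2 i j k l = Ln b1 b2 fi fj fk fl :=
  Ln_mod_two_erasure_general b1 b2 n m hm r hmono hfirst hlast fi fj fk fl i j hi hj
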